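/- Let Γ ⊂ ℝⁿ be an open, convex, symmetric cone with vertex at the origin satisfying Γₙ⁺ ⊆ Γ ⊆ Γ₁⁺. Then (1,0,…,0) ∈ Γ if and only if there exist a cone Γ̃ ⊂ ℝⁿ satisfying the same properties (open, convex, symmetric cone with Γₙ⁺ ⊆ Γ̃ ⊆ Γ₁⁺) and a number τ < 1 (τ ∈ (0,1)) such that Γ = (Γ̃)^τ, where (Γ̃)^τ = {λ : τλ + (1−τ)σ₁(λ)e ∈ Γ̃}. -/

import Mathlib

open Finset

/-- The `k`-th elementary symmetric polynomial of `x : Fin n → ℝ`. -/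
noncomputable def esymm (n k : ℕ) (x : Fin n → ℝ) : ℝ :=
  ∑ s ∈ Finset.powersetCard k (Finset.univ : Finset (Fin n)), ∏ i ∈ s, x i

/-- The Gårding cone `Γₖ⁺ = {λ : σⱼ(λ) > 0 for all 1 ≤ j ≤ k}`. -/
def GammaK (n k : ℕ) : Set (Fin n → ℝ) :=
  {x | ∀ j, 1 ≤ j → j ≤ k → 0 < esymm n j x}

/-- The transformation `λ ↦ λ^τ = τλ + (1-τ)σ₁(λ)e`. -/
def lamT (n : ℕ) (τ : ℝ) (x : Fin n → ℝ) : Fin n → ℝ :=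
  fun i => τ * x i + (1 - τ) * ∑ j, x j

/-!
If `Γ = (Γ̃)^τ` with `Γ̃ ⊇ Γₙ⁺` and `τ < 1`, then `(1,0,…,0) ∈ Γ` because
`(1,0,…,0)^τ = (1, 1-τ, …, 1-τ) ∈ Γₙ⁺`.

Conversely, if `(1,0,…,0) ∈ Γ`, openness and symmetry give `eᵢ - μe ∈ Γ` for a small `μ > 0` and
every `i`, hence `y - μσ₁(y)e = ∑ yᵢ (eᵢ - μe) ∈ Γ` for every `y ∈ Γₙ⁺`. So
`Γ̃ = {y : y - μσ₁(y)e ∈ Γ}`, the preimage of `Γ` under a linear map commuting with permutations,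
is an open convex symmetric cone containing `Γₙ⁺`. For `τ = (1 - nμ)/(1 - (n-1)μ)` the map
`y ↦ y - μσ₁(y)e` sends `λ^τ` to `τλ`, whence `Γ = (Γ̃)^τ`.
-/

open Filter Topology

section ScaleAddSum

variable {ι : Type*} [Fintype ι]

def scaleAddSum (a b : ℝ) : (ι → ℝ) →ₗ[ℝ] (ι → ℝ) where
  toFun x i := a * x i + b * ∑ j, x j
  map_add' x y := by
    ext i
    simp only [Pi.add_apply, sum_add_distrib]
    ring
  map_smul' c x := by
    ext i
    simp only [Pi.smul_apply, smul_eq_mul, ← mul_sum, RingHom.id_apply]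
    ring

@[simp]
lemma scaleAddSum_apply (a b : ℝ) (x : ι → ℝ) (i : ι) :
    scaleAddSum a b x i = a * x i + b * ∑ j, x j :=
  rfl

lemma sum_scaleAddSum (a b : ℝ) (x : ι → ℝ) :
    ∑ i, scaleAddSum a b x i = (a + Fintype.card ι * b) * ∑ i, x i := by
  simp only [scaleAddSum_apply, sum_add_distrib, ← mul_sum, sum_const, card_univ, nsmul_eq_mul]
  ring

lemma scaleAddSum_scaleAddSum (a b a' b' : ℝ) (x : ι → ℝ) :
    scaleAddSum a b (scaleAddSum a' b' x) =
      scaleAddSum (a * a') (a * b' + b * (a' + Fintype.card ι * b')) x := by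
  ext i
  rw [scaleAddSum_apply a b, sum_scaleAddSum]
  simp only [scaleAddSum_apply]
  ring

lemma scaleAddSum_zero_right (a : ℝ) (x : ι → ℝ) : scaleAddSum a 0 x = a • x := by
  ext i
  simp

lemma scaleAddSum_comp_perm (a b : ℝ) (σ : Equiv.Perm ι) (x : ι → ℝ) :
    scaleAddSum a b (x ∘ σ) = scaleAddSum a b x ∘ σ := by
  ext i
  simp [Equiv.sum_comp σ x]

end ScaleAddSum

lemma lamT_eq_scaleAddSum (n : ℕ) (τ : ℝ) : lamT n τ = scaleAddSum τ (1 - τ) :=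
  rfl

lemma exists_sub_smul_mem_of_isOpen {E : Type*} [AddCommGroup E] [TopologicalSpace E]
    [IsTopologicalAddGroup E] [Module ℝ E] [ContinuousSMul ℝ E] {Γ : Set E} (hopen : IsOpen Γ)
    {x : E} (hx : x ∈ Γ) (v : E) {c : ℝ} (hc : 0 < c) :
    ∃ μ : ℝ, 0 < μ ∧ μ < c ∧ x - μ • v ∈ Γ := by
  have hcont : Continuous fun μ : ℝ => x - μ • v := by fun_prop
  have hnear : ∀ᶠ μ in 𝓝[>] (0 : ℝ), (x - μ • v ∈ Γ ∧ μ < c) ∧ 0 < μ :=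
    Eventually.and (Eventually.filter_mono nhdsWithin_le_nhds <|
      ((hcont.tendsto' 0 x (by simp)).eventually (hopen.mem_nhds hx)).and (Iio_mem_nhds hc))
      self_mem_nhdsWithin
  obtain ⟨μ, ⟨hμΓ, hμc⟩, hμ⟩ := hnear.exists
  exact ⟨μ, hμ, hμc, hμΓ⟩

section ConvexCone

variable {E : Type*} [AddCommGroup E] [Module ℝ E] {Γ : Set E}

lemma smul_mem_iff_of_isCone (hcone : ∀ s : ℝ, 0 < s → ∀ x ∈ Γ, s • x ∈ Γ) {s : ℝ} (hs : 0 < s)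
    (x : E) : s • x ∈ Γ ↔ x ∈ Γ := by
  refine ⟨fun h => ?_, hcone s hs x⟩
  simpa [smul_smul, inv_mul_cancel₀ hs.ne'] using hcone s⁻¹ (inv_pos.2 hs) _ h

lemma sum_smul_mem_of_convex_of_isCone (hconv : Convex ℝ Γ)
    (hcone : ∀ s : ℝ, 0 < s → ∀ x ∈ Γ, s • x ∈ Γ) {κ : Type*} {t : Finset κ} (ht : t.Nonempty)
    {w : κ → ℝ} (hw : ∀ i ∈ t, 0 < w i) {v : κ → E} (hv : ∀ i ∈ t, v i ∈ Γ) :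
    ∑ i ∈ t, w i • v i ∈ Γ := by
  have hW : 0 < ∑ i ∈ t, w i := sum_pos hw ht
  have hmass := hconv.centerMass_mem (fun i hi => (hw i hi).le) hW hv
  simpa [centerMass, smul_smul, mul_inv_cancel₀ hW.ne'] using hcone _ hW _ hmass

end ConvexCone

section SymmetricCone

variable {ι : Type*} [Fintype ι] {Γ : Set (ι → ℝ)}

lemma perm_mem_preimage_scaleAddSum (hsym : ∀ σ : Equiv.Perm ι, ∀ x ∈ Γ, x ∘ σ ∈ Γ) (a b : ℝ) :
    ∀ σ : Equiv.Perm ι, ∀ x ∈ scaleAddSum a b ⁻¹' Γ, x ∘ σ ∈ scaleAddSum a b ⁻¹' Γ :=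
  fun σ x hx => by
    simpa only [Set.mem_preimage, scaleAddSum_comp_perm] using hsym σ _ hx

lemma smul_mem_preimage_scaleAddSum (hcone : ∀ s : ℝ, 0 < s → ∀ x ∈ Γ, s • x ∈ Γ) (a b : ℝ) :
    ∀ s : ℝ, 0 < s → ∀ x ∈ scaleAddSum a b ⁻¹' Γ, s • x ∈ scaleAddSum a b ⁻¹' Γ :=
  fun s hs x hx => by
    simpa only [Set.mem_preimage, map_smul] using hcone s hs _ hx

lemma scaleAddSum_one_neg_mem_of_pos (hconv : Convex ℝ Γ)
    (hsym : ∀ σ : Equiv.Perm ι, ∀ x ∈ Γ, x ∘ σ ∈ Γ) (hcone : ∀ s : ℝ, 0 < s → ∀ x ∈ Γ, s • x ∈ Γ)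
    [DecidableEq ι] {i₀ : ι} {μ : ℝ} (hμ : Pi.single i₀ 1 - μ • 1 ∈ Γ) {y : ι → ℝ}
    (hy : ∀ i, 0 < y i) : scaleAddSum 1 (-μ) y ∈ Γ := by
  have hbasis : ∀ i, Pi.single i 1 - μ • (1 : ι → ℝ) ∈ Γ := fun i => by
    have hconst : (μ • 1 : ι → ℝ) ∘ Equiv.swap i₀ i = μ • 1 := rfl
    simpa only [Pi.sub_comp, Pi.single_comp_equiv, Equiv.symm_swap, Equiv.swap_apply_left,
      hconst] using hsym (Equiv.swap i₀ i) _ hμ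
  have hdecomp : scaleAddSum 1 (-μ) y = ∑ i, y i • (Pi.single i 1 - μ • (1 : ι → ℝ)) := by
    ext j
    simp only [scaleAddSum_apply, Finset.sum_apply, Pi.smul_apply, Pi.sub_apply, Pi.single_apply,
      Pi.one_apply, smul_eq_mul, mul_sub, mul_ite, mul_one, mul_zero, sum_sub_distrib, sum_ite_eq,
      mem_univ, ↓reduceIte, ← sum_mul]
    ring
  rw [hdecomp]
  exact sum_smul_mem_of_convex_of_isCone hconv hcone ⟨i₀, mem_univ _⟩ (fun i _ => hy i)
    (fun i _ => hbasis i)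

end SymmetricCone

section GammaK

lemma esymm_one (n : ℕ) (x : Fin n → ℝ) : esymm n 1 x = ∑ i, x i := by
  simp [esymm, powersetCard_one]

lemma esymm_pos {n j : ℕ} (hj : j ≤ n) {x : Fin n → ℝ} (hx : ∀ i, 0 < x i) :
    0 < esymm n j x :=
  sum_pos (fun s _ => prod_pos fun i _ => hx i) (powersetCard_nonempty.2 (by simpa using hj))

lemma prod_add_eq_sum_esymm (n : ℕ) (x : Fin n → ℝ) (t : ℝ) :
    ∏ i, (x i + t) = ∑ k ∈ range (n + 1), esymm n k x * t ^ (n - k) := by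
  rw [prod_add, sum_powerset]
  simp only [card_univ, Fintype.card_fin]
  refine sum_congr rfl fun k _ => ?_
  rw [esymm, sum_mul]
  refine sum_congr rfl fun s hs => ?_
  rw [mem_powersetCard] at hs
  rw [prod_const, card_sdiff_of_subset hs.1, card_univ, Fintype.card_fin, hs.2]

lemma mem_GammaK_self_iff {n : ℕ} {x : Fin n → ℝ} : x ∈ GammaK n n ↔ ∀ i, 0 < x i := by
  refine ⟨fun hx i => ?_, fun hx j _ hj => esymm_pos hj hx⟩
  by_contra! hxi
  -- `∏ⱼ (xⱼ - xᵢ)` vanishes, yet expands into `σₖ(x) (-xᵢ)ⁿ⁻ᵏ ≥ 0` with `σₙ(x) > 0` among them.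
  have hzero : ∏ j, (x j + -x i) = 0 := prod_eq_zero (mem_univ i) (add_neg_cancel _)
  have hpos : 0 < ∏ j, (x j + -x i) := by
    rw [prod_add_eq_sum_esymm]
    refine sum_pos' (fun k hk => ?_) ⟨n, self_mem_range_succ n, ?_⟩
    · have hσ : 0 ≤ esymm n k x := by
        rcases Nat.eq_zero_or_pos k with rfl | hk1
        · simp [esymm]
        · exact (hx k hk1 (Nat.lt_succ_iff.mp (mem_range.mp hk))).le
      exact mul_nonneg hσ (pow_nonneg (by linarith) _)
    · simpa using hx n i.pos le_rfl
  exact hpos.ne' hzero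

lemma mem_GammaK_one_iff {n : ℕ} {x : Fin n → ℝ} : x ∈ GammaK n 1 ↔ 0 < ∑ i, x i := by
  refine ⟨fun hx => esymm_one n x ▸ hx 1 le_rfl le_rfl, fun hx j hj1 hj => ?_⟩
  obtain rfl : j = 1 := le_antisymm hj hj1
  rwa [esymm_one]

lemma lamT_single_mem_GammaK {n : ℕ} {τ : ℝ} (hτ : τ < 1) (i₀ : Fin n) :
    lamT n τ (Pi.single i₀ 1) ∈ GammaK n n := by
  refine mem_GammaK_self_iff.2 fun i => ?_
  rcases eq_or_ne i i₀ with rfl | hi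
  · simp [lamT]
  · simp only [lamT, Pi.single_apply, hi, sum_ite_eq', mem_univ, ↓reduceIte]
    linarith

end GammaK

theorem exists_lamT_preimage_eq_of_single_mem {n : ℕ} {Γ : Set (Fin n → ℝ)}
    (hopen : IsOpen Γ) (hconv : Convex ℝ Γ)
    (hsym : ∀ σ : Equiv.Perm (Fin n), ∀ x ∈ Γ, x ∘ σ ∈ Γ)
    (hcone : ∀ s : ℝ, 0 < s → ∀ x ∈ Γ, s • x ∈ Γ) (hup : Γ ⊆ GammaK n 1) {i₀ : Fin n}
    (h : Pi.single i₀ (1 : ℝ) ∈ Γ) :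
    ∃ (Γ' : Set (Fin n → ℝ)) (τ : ℝ),
      IsOpen Γ' ∧ Convex ℝ Γ' ∧
      (∀ σ : Equiv.Perm (Fin n), ∀ x ∈ Γ', x ∘ σ ∈ Γ') ∧
      (∀ s : ℝ, 0 < s → ∀ x ∈ Γ', s • x ∈ Γ') ∧
      GammaK n n ⊆ Γ' ∧ Γ' ⊆ GammaK n 1 ∧
      0 < τ ∧ τ < 1 ∧ Γ = {x | lamT n τ x ∈ Γ'} := by
  have hn : (0 : ℝ) < n := by exact_mod_cast i₀.pos
  obtain ⟨μ, hμ, hμn, hμΓ⟩ := exists_sub_smul_mem_of_isOpen hopen h 1 (one_div_pos.2 hn)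
  have hnμ : n * μ < 1 := by linarith [(lt_div_iff₀ hn).1 hμn]
  have hden : 0 < 1 - (n - 1) * μ := by linarith
  set τ := (1 - n * μ) / (1 - (n - 1) * μ)
  have hτ0 : 0 < τ := div_pos (by linarith) hden
  have hτ1 : τ < 1 := (div_lt_one hden).2 (by linarith)
  have hcomp : ∀ x, scaleAddSum 1 (-μ) (lamT n τ x) = τ • x := fun x => by
    have hcoeff : 1 * (1 - τ) + -μ * (τ + Fintype.card (Fin n) * (1 - τ)) = 0 := by
      have hτden : τ * (1 - (n - 1) * μ) = 1 - n * μ := div_mul_cancel₀ _ hden.ne'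
      rw [Fintype.card_fin]
      linear_combination -hτden
    rw [lamT_eq_scaleAddSum, scaleAddSum_scaleAddSum, hcoeff, scaleAddSum_zero_right, one_mul]
  refine ⟨scaleAddSum 1 (-μ) ⁻¹' Γ, τ, hopen.preimage (LinearMap.continuous_of_finiteDimensional _),
    hconv.linear_preimage _, perm_mem_preimage_scaleAddSum hsym _ _,
    smul_mem_preimage_scaleAddSum hcone _ _,
    fun y hy => scaleAddSum_one_neg_mem_of_pos hconv hsym hcone hμΓ (mem_GammaK_self_iff.1 hy),
    fun y hy => ?_, hτ0, hτ1, ?_⟩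
  · have hsum := mem_GammaK_one_iff.1 (hup hy)
    rw [sum_scaleAddSum, Fintype.card_fin] at hsum
    exact mem_GammaK_one_iff.2 (pos_of_mul_pos_right hsum (by linarith))
  · ext x
    simp only [Set.mem_ofPred_eq, Set.mem_preimage, hcomp, smul_mem_iff_of_isCone hcone hτ0]

theorem stmt7 (n : ℕ) (hn : 3 ≤ n) (Γ : Set (Fin n → ℝ))
    (hopen : IsOpen Γ) (hconv : Convex ℝ Γ)
    (hsym : ∀ σ : Equiv.Perm (Fin n), ∀ x ∈ Γ, x ∘ σ ∈ Γ)
    (hcone : ∀ s : ℝ, 0 < s → ∀ x ∈ Γ, s • x ∈ Γ)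
    (hup : Γ ⊆ GammaK n 1) :
    Pi.single (⟨0, by omega⟩ : Fin n) (1 : ℝ) ∈ Γ ↔
      ∃ (Γ' : Set (Fin n → ℝ)) (τ : ℝ),
        IsOpen Γ' ∧ Convex ℝ Γ' ∧
        (∀ σ : Equiv.Perm (Fin n), ∀ x ∈ Γ', x ∘ σ ∈ Γ') ∧
        (∀ s : ℝ, 0 < s → ∀ x ∈ Γ', s • x ∈ Γ') ∧
        GammaK n n ⊆ Γ' ∧ Γ' ⊆ GammaK n 1 ∧
        0 < τ ∧ τ < 1 ∧ Γ = {x | lamT n τ x ∈ Γ'} := by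
  refine ⟨exists_lamT_preimage_eq_of_single_mem hopen hconv hsym hcone hup, ?_⟩
  rintro ⟨Γ', τ, -, -, -, -, hlow', -, -, hτ1, rfl⟩
  exact hlow' (lamT_single_mem_GammaK hτ1 _)
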